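/- Let X, Y, Z be metric spaces, ℓ ∈ ℕ, f a multifunction from X to Y and g a multifunction from Y to Z. If f and g are both ℓ-fold Henkin-continuous, then the composition g ∘ f is ℓ-fold Henkin-continuous. -/
import Mathlib


/-- Composition of multifunctions. -/
def MComp {X Y Z : Type*} (g : Y → Set Z) (f : X → Set Y) : X → Set Z :=
  fun x => {z | f x ⊆ {y | (g y).Nonempty} ∧ ∃ y ∈ f x, z ∈ g y}

/-- `ℓ`-fold Henkin-continuity of a multifunction between metric spaces, via
Skolem functions `δ k` (depending only on `ε 0,…,ε k` and `x 0,…,x (k-1)`) and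
`y k` (depending only on `ε 0,…,ε (k-1)` and `x 0,…,x k`), indices `0`-based. -/
def HenkinFold {X Y : Type*} [MetricSpace X] [MetricSpace Y] (ℓ : ℕ) (f : X → Set Y) : Prop :=
  ∃ (δ : ℕ → (ℕ → ℝ) → (ℕ → X) → ℝ) (y : ℕ → (ℕ → ℝ) → (ℕ → X) → Y),
    (∀ k, k < ℓ → ∀ ε ε' x x', (∀ i ≤ k, ε i = ε' i) → (∀ i < k, x i = x' i) →
      δ k ε x = δ k ε' x') ∧
    (∀ k, k < ℓ → ∀ ε ε' x x', (∀ i < k, ε i = ε' i) → (∀ i ≤ k, x i = x' i) →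
      y k ε x = y k ε' x') ∧
    (∀ k, k < ℓ → ∀ ε x, (∀ i ≤ k, 0 < ε i) → 0 < δ k ε x) ∧
    (∀ (ε : ℕ → ℝ) (x : ℕ → X), (∀ k, k < ℓ → 0 < ε k) →
      (∀ k, k ≤ ℓ → (f (x k)).Nonempty) →
      (∀ k, k < ℓ → dist (x k) (x (k + 1)) < δ k ε x) →
      (0 < ℓ → y 0 ε x ∈ f (x 0)) ∧
      (∀ k, k + 1 < ℓ → y (k + 1) ε x ∈ f (x (k + 1)) ∧
        dist (y k ε x) (y (k + 1) ε x) < ε k) ∧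
      (0 < ℓ → ∃ y' ∈ f (x ℓ), dist (y (ℓ - 1) ε x) y' < ε (ℓ - 1)))

/-- Auxiliary `ε`-sequence for the first map in a composition: the `k`-th value is
`δg` applied to the sequence of `yf`-values, which depend only on earlier values. -/
noncomputable def eaux {X Y : Type*}
    (δg : ℕ → (ℕ → ℝ) → (ℕ → Y) → ℝ) (yf : ℕ → (ℕ → ℝ) → (ℕ → X) → Y)
    (ε : ℕ → ℝ) (x : ℕ → X) : ℕ → ℝ
  | k => δg k ε (fun i => yf i (fun j => if h : j < k then eaux δg yf ε x j else 1) x)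
  termination_by k => k
  decreasing_by exact h

/-- The composition of `ℓ`-fold Henkin-continuous multifunctions is again
`ℓ`-fold Henkin-continuous. -/
theorem henkinFold_comp {X Y Z : Type*} [MetricSpace X] [MetricSpace Y] [MetricSpace Z]
    (ℓ : ℕ) (f : X → Set Y) (g : Y → Set Z)
    (hf : HenkinFold ℓ f) (hg : HenkinFold ℓ g) :
    HenkinFold ℓ (MComp g f) := by
  obtain ⟨δf, yf, hδfdep, hyfdep, hδfpos, hfmain⟩ := hf
  obtain ⟨δg, yg, hδgdep, hygdep, hδgpos, hgmain⟩ := hg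
  -- key unfolding: for `k < ℓ`, the truncation in `eaux` is invisible
  have hkey : ∀ (ε : ℕ → ℝ) (x : ℕ → X) k, k < ℓ →
      eaux δg yf ε x k = δg k ε (fun i => yf i (eaux δg yf ε x) x) := by
    intro ε x k hk
    rw [eaux]
    exact hδgdep k hk ε ε _ _ (fun i _ => rfl)
      (fun i hik => hyfdep i (hik.trans hk) _ _ x x
        (fun j hj => by simp only [dif_pos (hj.trans hik)]) (fun j _ => rfl))
  -- dependency lemma for `eaux` and for the `yf`-values
  have hdep : ∀ (ε ε' : ℕ → ℝ) (x x' : ℕ → X) m, m < ℓ →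
      ((∀ i ≤ m, ε i = ε' i) → (∀ i < m, x i = x' i) →
        eaux δg yf ε x m = eaux δg yf ε' x' m) ∧
      ((∀ i < m, ε i = ε' i) → (∀ i ≤ m, x i = x' i) →
        yf m (eaux δg yf ε x) x = yf m (eaux δg yf ε' x') x') := by
    intro ε ε' x x' m
    induction m using Nat.strong_induction_on with
    | _ m ih =>
      intro hm
      constructor
      · intro hε hx
        rw [hkey ε x m hm, hkey ε' x' m hm]
        exact hδgdep m hm _ _ _ _ (fun i hi => hε i hi)
          (fun i hi => (ih i hi (hi.trans hm)).2
            (fun j hj => hε j (le_of_lt (hj.trans hi)))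
            (fun j hj => hx j (lt_of_le_of_lt hj hi)))
      · intro hε hx
        exact hyfdep m hm _ _ _ _
          (fun j hj => (ih j hj (hj.trans hm)).1
            (fun i hi => hε i (lt_of_le_of_lt hi hj))
            (fun i hi => hx i (le_of_lt (hi.trans hj)))) hx
  have hpos : ∀ (ε : ℕ → ℝ) (x : ℕ → X) k, k < ℓ → (∀ i ≤ k, 0 < ε i) →
      0 < eaux δg yf ε x k := by
    intro ε x k hk hε
    rw [hkey ε x k hk]
    exact hδgpos k hk ε _ hε
  refine ⟨fun k ε x => δf k (eaux δg yf ε x) x,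
    fun k ε x => yg k ε (fun i => yf i (eaux δg yf ε x) x), ?_, ?_, ?_, ?_⟩
  · -- δ dependency
    intro k hk ε ε' x x' hε hx
    exact hδfdep k hk _ _ x x'
      (fun i hi => (hdep ε ε' x x' i (lt_of_le_of_lt hi hk)).1
        (fun j hj => hε j (hj.trans hi)) (fun j hj => hx j (lt_of_lt_of_le hj hi))) hx
  · -- y dependency
    intro k hk ε ε' x x' hε hx
    exact hygdep k hk _ _ _ _ hε
      (fun i hi => (hdep ε ε' x x' i (lt_of_le_of_lt hi hk)).2
        (fun j hj => hε j (lt_of_lt_of_le hj hi)) (fun j hj => hx j (hj.trans hi)))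
  · -- positivity
    intro k hk ε x hε
    exact hδfpos k hk _ x (fun i hi => hpos ε x i (lt_of_le_of_lt hi hk)
      (fun j hj => hε j (hj.trans hi)))
  · -- main condition
    intro ε x hε hne hdist
    set e : ℕ → ℝ := eaux δg yf ε x with he
    set u : ℕ → Y := fun i => yf i e x with hu
    have hsub : ∀ k, k ≤ ℓ → f (x k) ⊆ {y | (g y).Nonempty} := by
      intro k hk
      obtain ⟨z, hz⟩ := hne k hk
      exact hz.1
    have hfne : ∀ k, k ≤ ℓ → (f (x k)).Nonempty := by
      intro k hk
      obtain ⟨z, hz⟩ := hne k hk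
      obtain ⟨y0, hy0, -⟩ := hz.2
      exact ⟨y0, hy0⟩
    have hepos : ∀ k, k < ℓ → 0 < e k :=
      fun k hk => hpos ε x k hk (fun j hj => hε j (lt_of_le_of_lt hj hk))
    obtain ⟨hU0, hUk, hUlast⟩ := hfmain e x hepos hfne hdist
    rcases Nat.eq_zero_or_pos ℓ with h0 | hℓ
    · subst h0
      exact ⟨fun h => absurd h (lt_irrefl 0), fun k hk => absurd hk (by omega),
        fun h => absurd h (lt_irrefl 0)⟩
    obtain ⟨u', hu'f, hu'dist⟩ := hUlast hℓ
    set yh : ℕ → Y := Function.update u ℓ u' with hyh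
    have hyh_ne : ∀ i, i ≠ ℓ → yh i = u i := fun i hi => Function.update_of_ne hi _ _
    have hyh_last : yh ℓ = u' := Function.update_self _ _ _
    have hyhmem : ∀ k, k ≤ ℓ → yh k ∈ f (x k) := by
      intro k hk
      rcases eq_or_lt_of_le hk with rfl | hk'
      · rw [hyh_last]; exact hu'f
      · rw [hyh_ne k (by omega)]
        match k with
        | 0 => exact hU0 hℓ
        | (j+1) => exact (hUk j hk').1
    have hgne : ∀ k, k ≤ ℓ → (g (yh k)).Nonempty :=
      fun k hk => hsub k hk (hyhmem k hk)
    have hδg_eq : ∀ k, k < ℓ → δg k ε yh = e k := by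
      intro k hk
      have h1 : e k = δg k ε u := hkey ε x k hk
      rw [h1]
      exact hδgdep k hk ε ε yh u (fun i _ => rfl)
        (fun i hi => hyh_ne i (by omega))
    have hgdist : ∀ k, k < ℓ → dist (yh k) (yh (k + 1)) < δg k ε yh := by
      intro k hk
      rw [hδg_eq k hk]
      rcases eq_or_lt_of_le (Nat.succ_le_of_lt hk) with heq | hk'
      · rw [hyh_ne k (by omega)]
        have hk1 : ℓ - 1 = k := by omega
        rw [show k + 1 = ℓ from heq, hyh_last]
        have := hu'dist
        rw [hk1] at this
        exact this
      · rw [hyh_ne k (by omega), hyh_ne (k + 1) (by omega)]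
        exact (hUk k hk').2
    obtain ⟨hZ0, hZk, hZlast⟩ := hgmain ε yh hε hgne hgdist
    have hyg_eq : ∀ j, j < ℓ → yg j ε yh = yg j ε u :=
      fun j hj => hygdep j hj ε ε yh u (fun _ _ => rfl)
        (fun i hi => hyh_ne i (by omega))
    refine ⟨?_, ?_, ?_⟩
    · intro h
      show yg 0 ε u ∈ MComp g f (x 0)
      refine ⟨hsub 0 (by omega), yh 0, hyhmem 0 (by omega), ?_⟩
      rw [← hyg_eq 0 hℓ]
      exact hZ0 hℓ
    · intro k hk
      obtain ⟨hmem, hd⟩ := hZk k hk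
      constructor
      · show yg (k + 1) ε u ∈ MComp g f (x (k + 1))
        refine ⟨hsub (k + 1) (by omega), yh (k + 1), hyhmem (k + 1) (by omega), ?_⟩
        rw [← hyg_eq (k + 1) hk]
        exact hmem
      · show dist (yg k ε u) (yg (k + 1) ε u) < ε k
        rw [← hyg_eq k (by omega), ← hyg_eq (k + 1) hk]
        exact hd
    · intro h
      obtain ⟨z', hz'g, hz'd⟩ := hZlast hℓ
      refine ⟨z', ⟨hsub ℓ le_rfl, yh ℓ, hyhmem ℓ le_rfl, hz'g⟩, ?_⟩
      show dist (yg (ℓ - 1) ε u) z' < ε (ℓ - 1)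
      rw [← hyg_eq (ℓ - 1) (by omega)]
      exact hz'd
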